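/- Let A be a circular convolution operator on ℓ²(ℤ_d×ℤ_d) with kernel a and let {Λ_k : k = 1,…,N_A} be the level sets of â. Let Ω ⊂ ℤ_d×ℤ_d and for each (j_1,j_2) ∈ Ω let r_{(j_1,j_2)} be the degree of the A-annihilator of e_{(j_1,j_2)} (the monic polynomial p of smallest degree with p(A)e_{(j_1,j_2)} = 0). If for each (j_1,j_2) ∈ Ω one has l_{(j_1,j_2)} ≥ r_{(j_1,j_2)} − 1 and for each k the submatrix of F_d ⊗ F_d formed by the rows indexed by Λ_k and the columns indexed by Ω has rank |Λ_k|, then Y = {e_{(j_1,j_2)}, A e_{(j_1,j_2)}, …, A^{l_{(j_1,j_2)}} e_{(j_1,j_2)} : (j_1,j_2) ∈ Ω} is a frame for ℓ²(ℤ_d×ℤ_d). -/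

import Mathlib

/-!
The characters `η_i(k) = ψ(i·k)` of `ℤ_d × ℤ_d` are eigenvectors of every convolution operator
`A`, with eigenvalues `â(i)`, and `e_j = ∑_i (F_d ⊗ F_d)(i, j) η_i` after normalising the `η_i`.
So `p(A)` multiplies the `η_i`-component of `e_j` by `p(â(i))`; for a Lagrange polynomial `p` of
a level set `Λ` only the components indexed by `Λ` survive, and the rank condition lets one
combine these vectors over `j ∈ Ω` into any single `η_i` with `i ∈ Λ`. Finally `p(A) e_j` only
depends on `p` modulo the `A`-annihilator of `e_j`, so it lies in the span of
`e_j, …, A^{l_j} e_j` as soon as `l_j ≥ r_j - 1`.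
-/

open Matrix

/-- Unnormalized 2D discrete Fourier transform of `a : ℤ_d × ℤ_d → ℂ`. -/
noncomputable def hatKer2 (d : ℕ) [NeZero d] (a : ZMod d × ZMod d → ℂ) :
    ZMod d × ZMod d → ℂ :=
  fun j => ∑ k : ZMod d × ZMod d,
    a k * Complex.exp (-(2 * (Real.pi : ℂ) * Complex.I) *
      ((j.1.val : ℂ) * (k.1.val : ℂ) + (j.2.val : ℂ) * (k.2.val : ℂ)) / (d : ℂ))

/-- The 2D circular convolution operator with kernel `a`, as a matrix. -/
def convMat2 (d : ℕ) (a : ZMod d × ZMod d → ℂ) :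
    Matrix (ZMod d × ZMod d) (ZMod d × ZMod d) ℂ :=
  Matrix.of fun k i => a (k - i)

/-- The Kronecker product `F_d ⊗ F_d`: its entry at `((i₁,i₂),(j₁,j₂))` is
`(1/d) ω_d^{i₁j₁ + i₂j₂}`. -/
noncomputable def F2Mat (d : ℕ) : Matrix (ZMod d × ZMod d) (ZMod d × ZMod d) ℂ :=
  Matrix.of fun i j => ((d : ℂ))⁻¹ * Complex.exp (-(2 * (Real.pi : ℂ) * Complex.I) *
    ((i.1.val : ℂ) * (j.1.val : ℂ) + (i.2.val : ℂ) * (j.2.val : ℂ)) / (d : ℂ))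

/-- The degree of the `A`-annihilator of `v`: the smallest degree of a monic
polynomial `p` with `p(A) v = 0`. -/
noncomputable def annihDeg2 (d : ℕ) [NeZero d]
    (A : Matrix (ZMod d × ZMod d) (ZMod d × ZMod d) ℂ) (v : ZMod d × ZMod d → ℂ) : ℕ :=
  sInf {n : ℕ | ∃ p : Polynomial ℂ, p.Monic ∧ p.natDegree = n ∧
    (Polynomial.aeval A p) *ᵥ v = 0}

open Polynomial

namespace Matrix

variable {R ι : Type*} [CommRing R] [Fintype ι] [DecidableEq ι]

theorem aeval_mulVec_of_mulVec_eq_smul {A : Matrix ι ι R} {v : ι → R} {μ : R}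
    (hv : A *ᵥ v = μ • v) (p : R[X]) : aeval A p *ᵥ v = p.eval μ • v := by
  induction p using Polynomial.induction_on with
  | C a => simp [Algebra.algebraMap_eq_smul_one, smul_mulVec]
  | add p q hp hq => simp [add_mulVec, hp, hq, add_smul]
  | monomial n a ih =>
    rw [pow_succ, ← mul_assoc, map_mul, aeval_X, ← mulVec_mulVec, hv, mulVec_smul, ih,
      smul_smul, eval_mul_X, mul_comm]

theorem aeval_mulVec_mem_span_of_monic [Nontrivial R] {A : Matrix ι ι R} {v : ι → R}
    {p : R[X]} (hp : p.Monic) (hpv : aeval A p *ᵥ v = 0) (q : R[X]) :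
    aeval A q *ᵥ v ∈ Submodule.span R ((fun m => A ^ m *ᵥ v) '' Set.Iio p.natDegree) := by
  classical
  have hmod : aeval A q *ᵥ v = aeval A (q %ₘ p) *ᵥ v := by
    conv_lhs => rw [← modByMonic_add_div q p]
    rw [mul_comm p, map_add, map_mul, add_mulVec, ← mulVec_mulVec, hpv, mulVec_zero,
      add_zero]
  have hdeg : q %ₘ p ∈ degreeLT R p.natDegree := by
    rw [mem_degreeLT, ← degree_eq_natDegree hp.ne_zero]
    exact degree_modByMonic_lt q hp
  rw [hmod]
  rw [degreeLT_eq_span_X_pow] at hdeg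
  generalize q %ₘ p = r at hdeg ⊢
  induction hdeg using Submodule.span_induction with
  | mem r hr =>
    obtain ⟨m, hm, rfl⟩ : ∃ m < p.natDegree, X ^ m = r := by simpa using hr
    rw [map_pow, aeval_X]
    exact Submodule.subset_span ⟨m, hm, rfl⟩
  | zero => simp
  | add r s _ _ hr hs => simpa [add_mulVec] using add_mem hr hs
  | smul c r _ hr => simpa [smul_mulVec] using Submodule.smul_mem _ c hr

theorem mulVec_surjective_of_rank_eq_card {K m n : Type*} [Field K] [Fintype m] [Fintype n]
    {M : Matrix m n K} (h : M.rank = Fintype.card m) : Function.Surjective M.mulVec := by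
  have : LinearMap.range M.mulVecLin = ⊤ := by
    apply Submodule.eq_top_of_finrank_eq
    rw [Module.finrank_fintype_fun_eq_card]
    exact h
  exact LinearMap.range_eq_top.mp this

end Matrix

theorem Polynomial.exists_eval_eq_one_of_ne {K : Type*} [Field K] (s : Finset K) (c : K) :
    ∃ p : K[X], p.eval c = 1 ∧ ∀ y ∈ s, y ≠ c → p.eval y = 0 := by
  classical
  refine ⟨Lagrange.basis (insert c s) id c, ?_, fun y hy h => ?_⟩
  · exact Lagrange.eval_basis_self (Set.injOn_id (α := K) _) (Finset.mem_insert_self _ _)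
  · exact Lagrange.eval_basis_of_ne (v := id) (Ne.symm h) (Finset.mem_insert_of_mem hy)

section LevelSets

variable {K ι κ ω : Type*} [Field K] [Fintype ι] [DecidableEq ι] [Fintype κ] [DecidableEq κ]
  [Fintype ω]

theorem eigenvector_mem_of_levelSet_surjective {A : Matrix ι ι K} {η : κ → ι → K} {μ : κ → K}
    (hη : ∀ i, A *ᵥ η i = μ i • η i) {B : Matrix κ ω K} {e : ω → ι → K}
    (he : ∀ q, e q = ∑ i, B i q • η i) {W : Submodule K (ι → K)}
    (hW : ∀ q (p : K[X]), aeval A p *ᵥ e q ∈ W) (i₀ : κ)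
    (hB : Function.Surjective (B.submatrix (Subtype.val : {i // μ i = μ i₀} → κ) id).mulVec) :
    η i₀ ∈ W := by
  classical
  obtain ⟨x, hx⟩ := hB (Pi.single ⟨i₀, rfl⟩ 1)
  obtain ⟨p, hp₁, hp₀⟩ := exists_eval_eq_one_of_ne (Finset.univ.image μ) (μ i₀)
  have hcoef : ∀ i, p.eval (μ i) * (B *ᵥ x) i = (Pi.single i₀ 1 : κ → K) i := by
    intro i
    by_cases h : μ i = μ i₀
    · rw [h, hp₁, one_mul]
      refine (congrFun hx ⟨i, h⟩).trans ?_
      simp [Pi.single_apply, Subtype.ext_iff]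
    · have : i ≠ i₀ := fun hi => h (hi ▸ rfl)
      simp [hp₀ _ (Finset.mem_image_of_mem μ (Finset.mem_univ i)) h, this]
  have hsum : ∑ q, x q • (aeval A p *ᵥ e q) = η i₀ := calc
    ∑ q, x q • (aeval A p *ᵥ e q) = ∑ i, (p.eval (μ i) * (B *ᵥ x) i) • η i := by
      simp only [he, mulVec_sum, mulVec_smul, aeval_mulVec_of_mulVec_eq_smul (hη _),
        Finset.smul_sum, smul_smul, mulVec, dotProduct, Finset.mul_sum, Finset.sum_smul]
      rw [Finset.sum_comm]
      refine Finset.sum_congr rfl fun i _ => Finset.sum_congr rfl fun q _ => ?_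
      ring_nf
    _ = η i₀ := by simp [hcoef, Pi.single_apply]
  rw [← hsum]
  exact Submodule.sum_mem _ fun q _ => Submodule.smul_mem _ _ (hW q p)

end LevelSets

namespace ZMod

variable {d : ℕ}

def prodDot (i k : ZMod d × ZMod d) : ZMod d := i.1 * k.1 + i.2 * k.2

lemma prodDot_sub (i k m : ZMod d × ZMod d) :
    prodDot i (k - m) = prodDot i k - prodDot i m := by
  simp only [prodDot, Prod.fst_sub, Prod.snd_sub]; ring

variable [NeZero d]

noncomputable def fourierVec (i : ZMod d × ZMod d) : ZMod d × ZMod d → ℂ :=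
  fun k => (d : ℂ)⁻¹ * stdAddChar (prodDot i k)

lemma exp_eq_stdAddChar_neg_prodDot (i k : ZMod d × ZMod d) :
    Complex.exp (-(2 * (Real.pi : ℂ) * Complex.I) *
      ((i.1.val : ℂ) * (k.1.val : ℂ) + (i.2.val : ℂ) * (k.2.val : ℂ)) / (d : ℂ))
    = stdAddChar (-prodDot i k) := by
  have h : -prodDot i k = ((-(i.1.val * k.1.val + i.2.val * k.2.val : ℕ) : ℤ) : ZMod d) := by
    push_cast
    simp [prodDot, natCast_val]
  rw [h, stdAddChar_coe]
  push_cast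
  ring_nf

lemma hatKer2_eq_sum (a : ZMod d × ZMod d → ℂ) (i : ZMod d × ZMod d) :
    hatKer2 d a i = ∑ k, a k * stdAddChar (-prodDot i k) := by
  simp only [hatKer2, exp_eq_stdAddChar_neg_prodDot]

lemma F2Mat_apply (i j : ZMod d × ZMod d) :
    F2Mat d i j = (d : ℂ)⁻¹ * stdAddChar (-prodDot i j) := by
  rw [F2Mat, Matrix.of_apply, exp_eq_stdAddChar_neg_prodDot]

lemma convMat2_mulVec_fourierVec (a : ZMod d × ZMod d → ℂ) (i : ZMod d × ZMod d) :
    convMat2 d a *ᵥ fourierVec i = hatKer2 d a i • fourierVec i := by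
  ext k
  simp only [convMat2, Matrix.mulVec, dotProduct, Matrix.of_apply, fourierVec, Pi.smul_apply,
    smul_eq_mul, hatKer2_eq_sum, Finset.sum_mul]
  rw [← (Equiv.subLeft k).sum_comp]
  refine Finset.sum_congr rfl fun m _ => ?_
  rw [Equiv.subLeft_apply, sub_sub_cancel, prodDot_sub, sub_eq_neg_add, AddChar.map_add_eq_mul]
  ring

lemma sum_stdAddChar_mul (t : ZMod d) :
    ∑ i : ZMod d, stdAddChar (i * t) = if t = 0 then (d : ℂ) else 0 := by
  split_ifs with h
  · simp [h]
  · rw [← AddChar.sum_eq_zero_of_ne_one (isPrimitive_stdAddChar d h)]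
    exact Finset.sum_congr rfl fun i _ => by rw [AddChar.mulShift_apply, mul_comm]

lemma sum_stdAddChar_prodDot (t : ZMod d × ZMod d) :
    ∑ i, stdAddChar (prodDot i t) = if t = 0 then (d : ℂ) ^ 2 else 0 := by
  simp only [Fintype.sum_prod_type, prodDot, AddChar.map_add_eq_mul, ← Finset.sum_mul,
    ← Finset.mul_sum, sum_stdAddChar_mul]
  by_cases h1 : t.1 = 0 <;> by_cases h2 : t.2 = 0 <;> simp [h1, h2, Prod.ext_iff, sq]

lemma sum_F2Mat_smul_fourierVec (j : ZMod d × ZMod d) :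
    ∑ i, F2Mat d i j • fourierVec i = Pi.single j 1 := by
  have hd : (d : ℂ) ≠ 0 := NeZero.ne _
  ext k
  simp only [Finset.sum_apply, Pi.smul_apply, smul_eq_mul, F2Mat_apply, fourierVec]
  have : ∀ i, (d : ℂ)⁻¹ * stdAddChar (-prodDot i j) * ((d : ℂ)⁻¹ * stdAddChar (prodDot i k))
      = ((d : ℂ) ^ 2)⁻¹ * stdAddChar (prodDot i (k - j)) := fun i => by
    rw [prodDot_sub, sub_eq_neg_add, AddChar.map_add_eq_mul]; ring
  rw [Finset.sum_congr rfl fun i _ => this i, ← Finset.mul_sum, sum_stdAddChar_prodDot]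
  rcases eq_or_ne k j with rfl | h
  · simp [hd]
  · simp [sub_eq_zero, h]

end ZMod

section Annihilator

variable {d : ℕ} [NeZero d]

theorem exists_monic_natDegree_annihDeg2 (A : Matrix (ZMod d × ZMod d) (ZMod d × ZMod d) ℂ)
    (v : ZMod d × ZMod d → ℂ) :
    ∃ p : ℂ[X], p.Monic ∧ p.natDegree = annihDeg2 d A v ∧ aeval A p *ᵥ v = 0 :=
  Nat.sInf_mem (s := {n | ∃ p : ℂ[X], p.Monic ∧ p.natDegree = n ∧ aeval A p *ᵥ v = 0})
    ⟨A.charpoly.natDegree, A.charpoly, A.charpoly_monic, rfl, by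
    rw [Matrix.aeval_self_charpoly, Matrix.zero_mulVec]⟩

theorem aeval_mulVec_mem_span_pow_mulVec_of_annihDeg2_le
    {A : Matrix (ZMod d × ZMod d) (ZMod d × ZMod d) ℂ} {Ω : Finset (ZMod d × ZMod d)}
    {l : ZMod d × ZMod d → ℕ} (hl : ∀ j ∈ Ω, annihDeg2 d A (Pi.single j 1) - 1 ≤ l j)
    {j : ZMod d × ZMod d} (hj : j ∈ Ω) (p : ℂ[X]) :
    aeval A p *ᵥ Pi.single j 1 ∈ Submodule.span ℂ {v : ZMod d × ZMod d → ℂ | ∃ i ∈ Ω, ∃ n ≤ l i,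
        v = A ^ n *ᵥ (Pi.single i 1 : ZMod d × ZMod d → ℂ)} := by
  obtain ⟨r, hr, hdeg, hann⟩ := exists_monic_natDegree_annihDeg2 A (Pi.single j 1)
  refine Submodule.span_mono ?_ (Matrix.aeval_mulVec_mem_span_of_monic hr hann p)
  rintro _ ⟨m, hm, rfl⟩
  have hlj := hl j hj
  exact ⟨j, hj, m, by simp only [Set.mem_Iio] at hm; omega, rfl⟩

end Annihilator

/-- if `l j ≥ r_j - 1`, where `r_j` is the degree of the `A`-annihilator
of `e_j`, and for each value `c` of `â` the submatrix of `F_d ⊗ F_d` with rows indexed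
by the level set `Λ = {j : â j = c}` and columns indexed by `Ω` has rank `|Λ|`, then
`Y = {A^n e_j : j ∈ Ω, n ≤ l j}` is a frame for `ℓ²(ℤ_d × ℤ_d)`. -/
theorem stmt13 (d : ℕ) [NeZero d] (a : ZMod d × ZMod d → ℂ)
    (Ω : Finset (ZMod d × ZMod d)) (l : ZMod d × ZMod d → ℕ)
    (hl : ∀ j ∈ Ω, annihDeg2 d (convMat2 d a) (Pi.single j 1) - 1 ≤ l j)
    (hrank : ∀ c ∈ Set.range (hatKer2 d a),
      Matrix.rank (Matrix.of
          fun (r : {j : ZMod d × ZMod d // hatKer2 d a j = c}) (q : ↥Ω) =>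
            F2Mat d r.1 q.1)
        = Nat.card {j : ZMod d × ZMod d | hatKer2 d a j = c}) :
    Submodule.span ℂ {v : ZMod d × ZMod d → ℂ | ∃ j ∈ Ω, ∃ n ≤ l j,
        v = (convMat2 d a) ^ n *ᵥ (Pi.single j 1 : ZMod d × ZMod d → ℂ)} = ⊤ := by
  classical
  set W := Submodule.span ℂ {v : ZMod d × ZMod d → ℂ | ∃ j ∈ Ω, ∃ n ≤ l j,
    v = (convMat2 d a) ^ n *ᵥ (Pi.single j 1 : ZMod d × ZMod d → ℂ)}
  have hW (q : ↥Ω) (p : ℂ[X]) : aeval (convMat2 d a) p *ᵥ Pi.single q.1 1 ∈ W :=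
    aeval_mulVec_mem_span_pow_mulVec_of_annihDeg2_le hl q.2 p
  have hfourier (i : ZMod d × ZMod d) : ZMod.fourierVec i ∈ W :=
    eigenvector_mem_of_levelSet_surjective (ZMod.convMat2_mulVec_fourierVec a)
      (B := Matrix.of fun i (q : ↥Ω) => F2Mat d i q)
      (fun q => (ZMod.sum_F2Mat_smul_fourierVec q.1).symm) hW i
      (Matrix.mulVec_surjective_of_rank_eq_card <| by
        rw [← Nat.card_eq_fintype_card]
        exact hrank _ ⟨i, rfl⟩)
  rw [eq_top_iff, ← (Pi.basisFun ℂ _).span_eq, Submodule.span_le]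
  rintro _ ⟨j, rfl⟩
  rw [Pi.basisFun_apply, ← ZMod.sum_F2Mat_smul_fourierVec]
  exact Submodule.sum_mem _ fun i _ => Submodule.smul_mem _ _ (hfourier i)
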